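/- arXiv:2509.16113 — 9 statements merged into one kernel-verified Lean document; each statement's English description precedes it below -/
import Mathlib

section
/- Let A be an n×n real symmetric invertible matrix and J a k×k symmetric involutory matrix (J² = I). Then the set {X ∈ ℝ^{n×k} : XᵀAX = J} is nonempty if and only if the number of positive eigenvalues of J is at most the number of positive eigenvalues of A and the number of negative eigenvalues of J is at most the number of negative eigenvalues of A. -/
open Matrix

section Aux

variable {n k : ℕ}

/-- Pulling back a congruence along a column-selection. -/
lemma submatrix_conj_eq {P : Type*} [Fintype P] (M : Matrix (Fin n) (Fin n) ℝ)
    (Z : Matrix (Fin n) (Fin k) ℝ) (f : P → Fin k) :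
    (Z.submatrix id f)ᵀ * M * (Z.submatrix id f) = (Zᵀ * M * Z).submatrix f f := by
  ext a b
  simp [Matrix.mul_apply, Finset.sum_mul, Finset.mul_sum]

/-- Forward direction, positive part, diagonal case. -/
lemma key_pos {d : Fin n → ℝ} {e : Fin k → ℝ} (he : ∀ i, e i = 1 ∨ e i = -1)
    {Z : Matrix (Fin n) (Fin k) ℝ} (hZ : Zᵀ * Matrix.diagonal d * Z = Matrix.diagonal e) :
    (Finset.univ.filter fun i => 0 < e i).card ≤
      (Finset.univ.filter fun j => 0 < d j).card := by
  classical
  set Z' : Matrix (Fin n) {i : Fin k // 0 < e i} ℝ := Z.submatrix id (·.1) with hZ'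
  have h1 : Z'ᵀ * Matrix.diagonal d * Z' = (1 : Matrix {i : Fin k // 0 < e i} _ ℝ) := by
    rw [hZ', submatrix_conj_eq, hZ]
    ext a b
    by_cases hab : a = b
    · subst hab
      have : e a.1 = 1 := (he a.1).resolve_right (by intro h; have := a.2; rw [h] at this; linarith)
      simp [this]
    · have hne : (a : Fin k) ≠ (b : Fin k) := fun h => hab (Subtype.ext h)
      simp [Matrix.diagonal_apply_ne _ hne, Matrix.one_apply_ne hab]
  set Dp : Matrix (Fin n) (Fin n) ℝ := Matrix.diagonal (fun j => max (d j) 0) with hDp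
  set Dm : Matrix (Fin n) (Fin n) ℝ := Matrix.diagonal (fun j => min (d j) 0) with hDm
  have hsum : Matrix.diagonal d = Dp + Dm := by
    rw [hDp, hDm]
    ext a b
    by_cases hab : a = b
    · subst hab
      simp only [Matrix.add_apply, Matrix.diagonal_apply_eq]
      rw [max_add_min, add_zero]
    · simp [Matrix.add_apply, Matrix.diagonal_apply_ne _ hab]
  have hsplit : Z'ᵀ * Dp * Z' = 1 + Z'ᵀ * (-Dm) * Z' := by
    have h2 : Z'ᵀ * Dp * Z' + Z'ᵀ * Dm * Z' = 1 := by
      rw [← h1, hsum, Matrix.mul_add, Matrix.add_mul]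
    rw [Matrix.mul_neg, Matrix.neg_mul, eq_sub_of_add_eq h2, sub_eq_add_neg]
  have hPSD : (Z'ᵀ * (-Dm) * Z').PosSemidef := by
    have hDmP : (-Dm).PosSemidef := by
      have hDm' : -Dm = Matrix.diagonal (fun j => -(min (d j) 0)) := by
        rw [hDm, Matrix.diagonal_neg]
      rw [hDm']
      exact Matrix.posSemidef_diagonal_iff.mpr fun j => neg_nonneg.mpr (min_le_right _ _)
    have := hDmP.conjTranspose_mul_mul_same Z'
    simpa using this
  have hPD : (Z'ᵀ * Dp * Z').PosDef := by
    rw [hsplit]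
    exact Matrix.PosDef.add_posSemidef Matrix.PosDef.one hPSD
  have hrank1 : (Z'ᵀ * Dp * Z').rank = Fintype.card {i : Fin k // 0 < e i} :=
    Matrix.rank_of_isUnit _ hPD.isUnit
  have hrank2 : (Z'ᵀ * Dp * Z').rank ≤ Dp.rank :=
    le_trans (Matrix.rank_mul_le_left _ _) (Matrix.rank_mul_le_right _ _)
  have hrank3 : Dp.rank = Fintype.card {j : Fin n // max (d j) 0 ≠ 0} := by
    rw [hDp, Matrix.rank_diagonal]
  have hiff : ∀ j : Fin n, (max (d j) 0 ≠ 0) ↔ 0 < d j := by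
    intro j
    constructor
    · intro h
      rcases lt_max_iff.mp ((le_max_right (d j) 0).lt_of_ne (Ne.symm h)) with h' | h'
      · exact h'
      · exact absurd h' (lt_irrefl 0)
    · intro h
      exact ne_of_gt (lt_max_of_lt_left h)
  calc (Finset.univ.filter fun i => 0 < e i).card
      = Fintype.card {i : Fin k // 0 < e i} := (Fintype.card_subtype _).symm
    _ = (Z'ᵀ * Dp * Z').rank := hrank1.symm
    _ ≤ Dp.rank := hrank2
    _ = Fintype.card {j : Fin n // max (d j) 0 ≠ 0} := hrank3
    _ = (Finset.univ.filter fun j => max (d j) 0 ≠ 0).card := Fintype.card_subtype _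
    _ = (Finset.univ.filter fun j => 0 < d j).card := by
        apply Finset.card_bij (fun a _ => a)
        · intro a ha; simp only [Finset.mem_filter] at *
          exact ⟨ha.1, (hiff a).mp ha.2⟩
        · intro a b _ _ h; exact h
        · intro b hb; simp only [Finset.mem_filter] at *
          exact ⟨b, ⟨hb.1, (hiff b).mpr hb.2⟩, rfl⟩

/-- Forward direction, negative part, diagonal case. -/
lemma key_neg {d : Fin n → ℝ} {e : Fin k → ℝ} (he : ∀ i, e i = 1 ∨ e i = -1)
    {Z : Matrix (Fin n) (Fin k) ℝ} (hZ : Zᵀ * Matrix.diagonal d * Z = Matrix.diagonal e) :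
    (Finset.univ.filter fun i => e i < 0).card ≤
      (Finset.univ.filter fun j => d j < 0).card := by
  have he' : ∀ i, (-e) i = 1 ∨ (-e) i = -1 := by
    intro i; rcases he i with h | h
    · right; simp [h]
    · left; simp [h]
  have hdn : ∀ {m : ℕ} (w : Fin m → ℝ), Matrix.diagonal (-w) = -Matrix.diagonal w := by
    intro m w
    rw [Matrix.diagonal_neg]
    congr 1
  have hZ' : Zᵀ * Matrix.diagonal (-d) * Z = Matrix.diagonal (-e) := by
    rw [hdn, hdn, Matrix.mul_neg, Matrix.neg_mul, hZ]
  have := key_pos he' hZ'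
  simpa [neg_pos] using this

/-- Backward direction: construction, diagonal case. -/
lemma construct {d : Fin n → ℝ} {e : Fin k → ℝ} (he : ∀ i, e i = 1 ∨ e i = -1)
    (h1 : (Finset.univ.filter fun i => 0 < e i).card ≤
      (Finset.univ.filter fun j => 0 < d j).card)
    (h2 : (Finset.univ.filter fun i => e i < 0).card ≤
      (Finset.univ.filter fun j => d j < 0).card) :
    ∃ Z : Matrix (Fin n) (Fin k) ℝ, Zᵀ * Matrix.diagonal d * Z = Matrix.diagonal e := by
  classical
  have hneg : ∀ i : Fin k, ¬ 0 < e i → e i < 0 := by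
    intro i hi
    rcases he i with h | h
    · exact absurd (h ▸ one_pos) hi
    · rw [h]; norm_num
  obtain ⟨f⟩ : Nonempty ({i : Fin k // 0 < e i} ↪ {j : Fin n // 0 < d j}) := by
    apply Function.Embedding.nonempty_of_card_le
    rw [Fintype.card_subtype, Fintype.card_subtype]; exact h1
  obtain ⟨g⟩ : Nonempty ({i : Fin k // e i < 0} ↪ {j : Fin n // d j < 0}) := by
    apply Function.Embedding.nonempty_of_card_le
    rw [Fintype.card_subtype, Fintype.card_subtype]; exact h2
  set F : Fin k → Fin n := fun i =>
    if h : 0 < e i then (f ⟨i, h⟩).1 else (g ⟨i, hneg i h⟩).1 with hF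
  have hFpos : ∀ i, 0 < e i → 0 < d (F i) := by
    intro i h; rw [hF]; simp only [dif_pos h]; exact (f ⟨i, h⟩).2
  have hFneg : ∀ i, ¬ 0 < e i → d (F i) < 0 := by
    intro i h; rw [hF]; simp only [dif_neg h]; exact (g ⟨i, hneg i h⟩).2
  have hFinj : Function.Injective F := by
    intro i i' hii'
    by_cases hi : 0 < e i <;> by_cases hi' : 0 < e i'
    · rw [hF] at hii'; simp only [dif_pos hi, dif_pos hi'] at hii'
      have := f.injective (Subtype.ext hii')
      exact congrArg Subtype.val this
    · exact absurd (hii' ▸ hFpos i hi) (asymm (hFneg i' hi'))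
    · exact absurd (hii' ▸ hFneg i hi) (asymm (hFpos i' hi'))
    · rw [hF] at hii'; simp only [dif_neg hi, dif_neg hi'] at hii'
      have := g.injective (Subtype.ext hii')
      exact congrArg Subtype.val this
  set c : Fin k → ℝ := fun i => (Real.sqrt |d (F i)|)⁻¹ with hc
  refine ⟨Matrix.of fun j i => if j = F i then c i else 0, ?_⟩
  ext i i'
  have hstep : ((Matrix.of fun j i => if j = F i then c i else 0)ᵀ * Matrix.diagonal d *
      (Matrix.of fun j i => if j = F i then c i else 0)) i i' =
      ∑ x : Fin n, (if x = F i then c i else 0) * d x * (if x = F i' then c i' else 0) := by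
    rw [Matrix.mul_apply]
    refine Finset.sum_congr rfl fun x _ => ?_
    rw [Matrix.mul_diagonal, Matrix.transpose_apply, Matrix.of_apply, Matrix.of_apply]
  rw [hstep, Finset.sum_eq_single (F i)
    (fun j _ hj => by rw [if_neg hj, zero_mul, zero_mul])
    (fun h => absurd (Finset.mem_univ _) h), if_pos rfl]
  by_cases hii : i = i'
  · subst hii
    rw [if_pos rfl, Matrix.diagonal_apply_eq]
    have habs : (0:ℝ) < |d (F i)| := by
      by_cases h : 0 < e i
      · exact abs_pos.mpr (ne_of_gt (hFpos i h))
      · exact abs_pos.mpr (ne_of_lt (hFneg i h))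
    have hsqrt : Real.sqrt |d (F i)| * Real.sqrt |d (F i)| = |d (F i)| :=
      Real.mul_self_sqrt (abs_nonneg _)
    have hsqrt_ne : Real.sqrt |d (F i)| ≠ 0 := by positivity
    have hval : c i * d (F i) * c i = d (F i) / |d (F i)| := by
      calc c i * d (F i) * c i
          = d (F i) / (Real.sqrt |d (F i)| * Real.sqrt |d (F i)|) := by rw [hc]; ring
        _ = d (F i) / |d (F i)| := by rw [hsqrt]
    rw [hval]
    by_cases h : 0 < e i
    · rw [abs_of_pos (hFpos i h), div_self (ne_of_gt (hFpos i h))]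
      exact ((he i).resolve_right (by intro hh; rw [hh] at h; linarith)).symm
    · have hd := hFneg i h
      rw [abs_of_neg hd, div_neg_eq_neg_div, div_self (ne_of_lt hd)]
      exact (((he i).resolve_left (fun hh => h (hh ▸ one_pos))).symm : (-1 : ℝ) = e i)
  · have hne : F i ≠ F i' := fun h => hii (hFinj h)
    rw [if_neg hne, Matrix.diagonal_apply_ne _ hii, mul_zero]

end Aux

/-- The indefinite Stiefel manifold `{X : Xᵀ A X = J}` is nonempty if and only if
`i₊(J) ≤ i₊(A)` and `i₋(J) ≤ i₋(A)`, where `i₊`/`i₋` count positive/negative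
eigenvalues (with multiplicity) of a real symmetric matrix. -/
theorem stmt_0 {n k : ℕ} (A : Matrix (Fin n) (Fin n) ℝ) (J : Matrix (Fin k) (Fin k) ℝ)
    (hA : A.IsHermitian) (hAinv : IsUnit A.det)
    (hJ : J.IsHermitian) (hJ2 : J * J = 1) :
    (∃ X : Matrix (Fin n) (Fin k) ℝ, Xᵀ * A * X = J) ↔
      ((Finset.univ.filter fun i => 0 < hJ.eigenvalues i).card ≤
          (Finset.univ.filter fun i => 0 < hA.eigenvalues i).card ∧
        (Finset.univ.filter fun i => hJ.eigenvalues i < 0).card ≤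
          (Finset.univ.filter fun i => hA.eigenvalues i < 0).card) := by
  classical
  set μ := hA.eigenvalues with hμ
  set ν := hJ.eigenvalues with hν
  set U : Matrix (Fin n) (Fin n) ℝ := (hA.eigenvectorUnitary : Matrix (Fin n) (Fin n) ℝ) with hU
  set V : Matrix (Fin k) (Fin k) ℝ := (hJ.eigenvectorUnitary : Matrix (Fin k) (Fin k) ℝ) with hV
  have hU1 : U * Uᵀ = 1 := by
    have := Matrix.mem_unitaryGroup_iff.mp (hA.eigenvectorUnitary).2
    simpa [Matrix.star_eq_conjTranspose, Matrix.conjTranspose_eq_transpose_of_trivial] using this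
  have hU2 : Uᵀ * U = 1 := by
    have := Matrix.mem_unitaryGroup_iff'.mp (hA.eigenvectorUnitary).2
    simpa [Matrix.star_eq_conjTranspose, Matrix.conjTranspose_eq_transpose_of_trivial] using this
  have hV1 : V * Vᵀ = 1 := by
    have := Matrix.mem_unitaryGroup_iff.mp (hJ.eigenvectorUnitary).2
    simpa [Matrix.star_eq_conjTranspose, Matrix.conjTranspose_eq_transpose_of_trivial] using this
  have hV2 : Vᵀ * V = 1 := by
    have := Matrix.mem_unitaryGroup_iff'.mp (hJ.eigenvectorUnitary).2
    simpa [Matrix.star_eq_conjTranspose, Matrix.conjTranspose_eq_transpose_of_trivial] using this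
  have hU2' : ∀ {m : ℕ} (B : Matrix (Fin n) (Fin m) ℝ), Uᵀ * (U * B) = B := by
    intro m B; rw [← Matrix.mul_assoc, hU2, Matrix.one_mul]
  have hV2' : ∀ {m : ℕ} (B : Matrix (Fin k) (Fin m) ℝ), Vᵀ * (V * B) = B := by
    intro m B; rw [← Matrix.mul_assoc, hV2, Matrix.one_mul]
  have hAeq : A = U * Matrix.diagonal μ * Uᵀ := by
    have := hA.spectral_theorem
    simpa [Matrix.star_eq_conjTranspose, Matrix.conjTranspose_eq_transpose_of_trivial,
      RCLike.ofReal_real_eq_id] using this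
  have hJeq : J = V * Matrix.diagonal ν * Vᵀ := by
    have := hJ.spectral_theorem
    simpa [Matrix.star_eq_conjTranspose, Matrix.conjTranspose_eq_transpose_of_trivial,
      RCLike.ofReal_real_eq_id] using this
  -- eigenvalues of J are ±1
  have hν2 : ∀ i, ν i = 1 ∨ ν i = -1 := by
    intro i
    have hDD : Matrix.diagonal ν * Matrix.diagonal ν = 1 := by
      have h : (V * Matrix.diagonal ν * Vᵀ) * (V * Matrix.diagonal ν * Vᵀ) = 1 := by
        rw [← hJeq]; exact hJ2
      have h2 := congrArg (fun B => Vᵀ * B * V) h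
      simpa only [Matrix.mul_assoc, hV2', hV2, Matrix.mul_one, Matrix.one_mul] using h2
    have hii : ν i * ν i = 1 := by
      have h' := congrFun (congrFun hDD i) i
      simpa [Matrix.diagonal_mul_diagonal, Matrix.diagonal_apply, Matrix.one_apply] using h'
    exact mul_self_eq_one_iff.mp hii
  constructor
  · rintro ⟨X, hX⟩
    have hZ : (Uᵀ * X * V)ᵀ * Matrix.diagonal μ * (Uᵀ * X * V) = Matrix.diagonal ν := by
      have e1 : (Uᵀ * X * V)ᵀ * Matrix.diagonal μ * (Uᵀ * X * V) = Vᵀ * (Xᵀ * A * X) * V := by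
        rw [hAeq]
        simp only [Matrix.transpose_mul, Matrix.transpose_transpose, Matrix.mul_assoc]
      rw [e1, hX, hJeq]
      simp only [Matrix.mul_assoc, hV2', hV2, Matrix.mul_one]
    exact ⟨key_pos hν2 hZ, key_neg hν2 hZ⟩
  · rintro ⟨h1, h2⟩
    obtain ⟨Z, hZ⟩ := construct hν2 h1 h2
    refine ⟨U * Z * Vᵀ, ?_⟩
    have e1 : (U * Z * Vᵀ)ᵀ * A * (U * Z * Vᵀ) = V * (Zᵀ * Matrix.diagonal μ * Z) * Vᵀ := by
      rw [hAeq]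
      simp only [Matrix.transpose_mul, Matrix.transpose_transpose, Matrix.mul_assoc, hU2']
    rw [e1, hZ, ← hJeq]
end

section
/- Let X ∈ ℝ^{n×k} satisfy XᵀAX = J and let X⊥ ∈ ℝ^{n×(n−k)} be a full-rank matrix with XᵀX⊥ = 0. Then the matrix E = [X, A⁻¹X⊥] ∈ ℝ^{n×n} is invertible, with inverse given by stacking JXᵀA on top of (X⊥ᵀA⁻¹X⊥)⁻¹X⊥ᵀ. -/
open Matrix

/-! Since `Xᵀ X⊥ = 0`, the stacked matrix is a left inverse of `E` block by block: `J Xᵀ A X = J² = 1`,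
`J Xᵀ A A⁻¹ X⊥ = J Xᵀ X⊥ = 0`, `(X⊥ᵀ A⁻¹ X⊥)⁻¹ X⊥ᵀ X = 0` and the last block is `1` by construction.
A left inverse forces `k ≤ n`, so `E` is square and the left inverse is also a right inverse. -/

namespace Matrix

theorem card_le_card_of_mul_eq_one {m n K : Type*} [Field K] [Fintype m] [Fintype n]
    [DecidableEq m] {B : Matrix m n K} {C : Matrix n m K} (h : B * C = 1) :
    Fintype.card m ≤ Fintype.card n :=
  calc Fintype.card m = (1 : Matrix m m K).rank := rank_one.symm
    _ = (B * C).rank := by rw [h]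
    _ ≤ B.rank := rank_mul_le_left B C
    _ ≤ Fintype.card n := rank_le_card_width B

theorem fromRows_mul_fromCols_eq_one {m m₁ m₂ R : Type*} [Semiring R] [Fintype m]
    [DecidableEq m₁] [DecidableEq m₂] {B₁ : Matrix m₁ m R} {B₂ : Matrix m₂ m R}
    {C₁ : Matrix m m₁ R} {C₂ : Matrix m m₂ R} (h₁₁ : B₁ * C₁ = 1) (h₁₂ : B₁ * C₂ = 0)
    (h₂₁ : B₂ * C₁ = 0) (h₂₂ : B₂ * C₂ = 1) :
    fromRows B₁ B₂ * fromCols C₁ C₂ = 1 := by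
  rw [fromRows_mul_fromCols, h₁₁, h₁₂, h₂₁, h₂₂, fromBlocks_one]

end Matrix

theorem stmt_1_general {n k : ℕ} (A : Matrix (Fin n) (Fin n) ℝ) (J : Matrix (Fin k) (Fin k) ℝ)
    (hAinv : IsUnit A.det) (hJ2 : J * J = 1)
    (X : Matrix (Fin n) (Fin k) ℝ) (hX : Xᵀ * A * X = J)
    (Xp : Matrix (Fin n) (Fin (n - k)) ℝ)
    (hperp : Xᵀ * Xp = 0) (hXpinv : IsUnit (Xpᵀ * A⁻¹ * Xp).det) :
    fromCols X (A⁻¹ * Xp) * fromRows (J * Xᵀ * A) ((Xpᵀ * A⁻¹ * Xp)⁻¹ * Xpᵀ) = 1 ∧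
    fromRows (J * Xᵀ * A) ((Xpᵀ * A⁻¹ * Xp)⁻¹ * Xpᵀ) * fromCols X (A⁻¹ * Xp) = 1 := by
  have hperp' : Xpᵀ * X = 0 := by simpa using congrArg transpose hperp
  have left_inv : fromRows (J * Xᵀ * A) ((Xpᵀ * A⁻¹ * Xp)⁻¹ * Xpᵀ) *
      fromCols X (A⁻¹ * Xp) = 1 := by
    apply fromRows_mul_fromCols_eq_one
    · rw [Matrix.mul_assoc J Xᵀ A, Matrix.mul_assoc J, hX, hJ2]
    · rw [Matrix.mul_assoc (J * Xᵀ) A, ← Matrix.mul_assoc A, mul_nonsing_inv A hAinv,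
        Matrix.one_mul, Matrix.mul_assoc J, hperp, Matrix.mul_zero]
    · rw [Matrix.mul_assoc, hperp', Matrix.mul_zero]
    · rw [Matrix.mul_assoc, ← Matrix.mul_assoc Xpᵀ, nonsing_inv_mul _ hXpinv]
  have hk : k + (n - k) ≤ n := by simpa using card_le_card_of_mul_eq_one left_inv
  have hcard : Fintype.card (Fin n) = Fintype.card (Fin k ⊕ Fin (n - k)) := by simp; omega
  exact ⟨(mul_eq_one_comm_of_card_eq _ _ _ hcard).mpr left_inv, left_inv⟩

/-- For `X` with `Xᵀ A X = J` and a full-rank `X⊥` with `Xᵀ X⊥ = 0`, the matrix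
`E = [X, A⁻¹X⊥]` is invertible, with inverse obtained by stacking `J Xᵀ A` on top of
`(X⊥ᵀ A⁻¹ X⊥)⁻¹ X⊥ᵀ`. -/
theorem stmt_1 {n k : ℕ} (A : Matrix (Fin n) (Fin n) ℝ) (J : Matrix (Fin k) (Fin k) ℝ)
    (hA : Aᵀ = A) (hAinv : IsUnit A.det) (hJ : Jᵀ = J) (hJ2 : J * J = 1)
    (X : Matrix (Fin n) (Fin k) ℝ) (hX : Xᵀ * A * X = J)
    (Xp : Matrix (Fin n) (Fin (n - k)) ℝ) (hXp : Xp.rank = n - k)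
    (hperp : Xᵀ * Xp = 0) (hXpinv : IsUnit (Xpᵀ * A⁻¹ * Xp).det) :
    fromCols X (A⁻¹ * Xp) * fromRows (J * Xᵀ * A) ((Xpᵀ * A⁻¹ * Xp)⁻¹ * Xpᵀ) = 1 ∧
    fromRows (J * Xᵀ * A) ((Xpᵀ * A⁻¹ * Xp)⁻¹ * Xpᵀ) * fromCols X (A⁻¹ * Xp) = 1 :=
  stmt_1_general A J hAinv hJ2 X hX Xp hperp hXpinv
end

section
/- Let X ∈ ℝ^{n×k} satisfy XᵀAX = J and X⊥ ∈ ℝ^{n×(n−k)} be full-rank with XᵀX⊥ = 0. Then I_n = XJXᵀA + A⁻¹X⊥(X⊥ᵀA⁻¹X⊥)⁻¹X⊥ᵀ. -/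
/-!
The columns of `X` and `A⁻¹ X⊥` together with the rows of `J Xᵀ A` and
`(X⊥ᵀ A⁻¹ X⊥)⁻¹ X⊥ᵀ` form a biorthogonal system of `n` vectors and `n` covectors, so the
sum of the corresponding outer products is the identity.
-/

open Matrix

namespace Matrix

variable {R m n k l : Type*} [Fintype m] [Fintype n] [Fintype k] [Fintype l]

theorem card_le_of_mul_eq_one [CommSemiring R] [StrongRankCondition R] [DecidableEq m]
    {B : Matrix m n R} {C : Matrix n m R} (h : B * C = 1) :
    Fintype.card m ≤ Fintype.card n :=
  calc Fintype.card m = (B * C).rank := by rw [h, rank_one]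
    _ ≤ B.rank := rank_mul_le_left B C
    _ ≤ Fintype.card n := rank_le_card_width B

theorem mul_add_mul_eq_one_of_biorthogonal [Semiring R] [IsStablyFiniteRing R]
    [DecidableEq m] [DecidableEq k] [DecidableEq l]
    (hcard : Fintype.card k + Fintype.card l = Fintype.card m)
    {X : Matrix m k R} {Y : Matrix m l R} {P : Matrix k m R} {Q : Matrix l m R}
    (hPX : P * X = 1) (hPY : P * Y = 0) (hQX : Q * X = 0) (hQY : Q * Y = 1) :
    X * P + Y * Q = 1 := by
  rw [← fromCols_mul_fromRows]
  refine (mul_eq_one_comm_of_card_eq _ _ _ (by simp [hcard])).mpr ?_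
  rw [fromRows_mul_fromCols, hPX, hPY, hQX, hQY, fromBlocks_one]

end Matrix

theorem stmt_2_general {n k : ℕ} (A : Matrix (Fin n) (Fin n) ℝ) (J : Matrix (Fin k) (Fin k) ℝ)
    (hAinv : IsUnit A.det) (hJ2 : J * J = 1)
    (X : Matrix (Fin n) (Fin k) ℝ) (hX : Xᵀ * A * X = J)
    (Xp : Matrix (Fin n) (Fin (n - k)) ℝ)
    (hperp : Xᵀ * Xp = 0) (hXpinv : IsUnit (Xpᵀ * A⁻¹ * Xp).det) :
    (1 : Matrix (Fin n) (Fin n) ℝ) =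
      X * J * Xᵀ * A + A⁻¹ * Xp * (Xpᵀ * A⁻¹ * Xp)⁻¹ * Xpᵀ := by
  have hPX : J * Xᵀ * A * X = 1 := by
    simp only [Matrix.mul_assoc] at hX ⊢
    rw [hX, hJ2]
  have hPY : J * Xᵀ * A * (A⁻¹ * Xp) = 0 := by
    simp only [Matrix.mul_assoc]
    rw [mul_nonsing_inv_cancel_left _ _ hAinv, hperp, Matrix.mul_zero]
  have hQX : (Xpᵀ * A⁻¹ * Xp)⁻¹ * Xpᵀ * X = 0 := by
    have hperp' : Xpᵀ * X = 0 := by simpa using congrArg transpose hperp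
    rw [Matrix.mul_assoc, hperp', Matrix.mul_zero]
  have hQY : (Xpᵀ * A⁻¹ * Xp)⁻¹ * Xpᵀ * (A⁻¹ * Xp) = 1 := by
    rw [Matrix.mul_assoc, ← Matrix.mul_assoc Xpᵀ]
    exact nonsing_inv_mul _ hXpinv
  -- `n - k` truncates, so `k + (n - k) = n` needs `k ≤ n`, which the left inverse of `X` gives.
  have hkn : k ≤ n := by simpa using card_le_of_mul_eq_one hPX
  have hsum := mul_add_mul_eq_one_of_biorthogonal (by simp only [Fintype.card_fin]; omega)
    hPX hPY hQX hQY
  simp only [Matrix.mul_assoc] at hsum ⊢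
  exact hsum.symm

/-- `I_n = X J Xᵀ A + A⁻¹ X⊥ (X⊥ᵀ A⁻¹ X⊥)⁻¹ X⊥ᵀ`. -/
theorem stmt_2 {n k : ℕ} (A : Matrix (Fin n) (Fin n) ℝ) (J : Matrix (Fin k) (Fin k) ℝ)
    (hA : Aᵀ = A) (hAinv : IsUnit A.det) (hJ : Jᵀ = J) (hJ2 : J * J = 1)
    (X : Matrix (Fin n) (Fin k) ℝ) (hX : Xᵀ * A * X = J)
    (Xp : Matrix (Fin n) (Fin (n - k)) ℝ) (hXp : Xp.rank = n - k)
    (hperp : Xᵀ * Xp = 0) (hXpinv : IsUnit (Xpᵀ * A⁻¹ * Xp).det) :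
    (1 : Matrix (Fin n) (Fin n) ℝ) =
      X * J * Xᵀ * A + A⁻¹ * Xp * (Xpᵀ * A⁻¹ * Xp)⁻¹ * Xpᵀ :=
  stmt_2_general A J hAinv hJ2 X hX Xp hperp hXpinv
end

section
/- For X ∈ ℝ^{n×k} with XᵀAX = J, a matrix Z of the form Z = XW + A⁻¹X⊥K satisfies ZᵀAX + XᵀAZ = 0 if and only if JW is skew-symmetric (for any K ∈ ℝ^{(n−k)×k}). -/
/-!
With `A` symmetric, `Zᵀ A X` is the transpose of `Xᵀ A Z`, so the tangency condition says that
`Xᵀ A Z` is skew-symmetric. For `Z = X W + A⁻¹ X⊥ K` the second summand contributes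
`Xᵀ X⊥ K = 0`, leaving `Xᵀ A Z = Xᵀ A X W = J W`.
-/

open Matrix

namespace Matrix

variable {R : Type*} [CommRing R] {l m n p : Type*} [Fintype n]

theorem transpose_mul_mul_eq_transpose_of_transpose_eq {A : Matrix n n R} (hA : Aᵀ = A)
    (X : Matrix n m R) (Z : Matrix n l R) : Zᵀ * A * X = (Xᵀ * A * Z)ᵀ := by
  simp only [transpose_mul, transpose_transpose, hA, Matrix.mul_assoc]

theorem transpose_mul_mul_add_nonsing_inv_mul_mul [Fintype m] [DecidableEq n] [Fintype p]
    {A : Matrix n n R} (hA : IsUnit A.det) {X : Matrix n m R} {J : Matrix m m R}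
    (hX : Xᵀ * A * X = J) {Xp : Matrix n p R} (hperp : Xᵀ * Xp = 0)
    (W : Matrix m l R) (K : Matrix p l R) :
    Xᵀ * A * (X * W + A⁻¹ * Xp * K) = J * W := by
  calc Xᵀ * A * (X * W + A⁻¹ * Xp * K)
      = Xᵀ * A * X * W + Xᵀ * (A * A⁻¹) * Xp * K := by
        simp only [Matrix.mul_add, Matrix.mul_assoc]
    _ = J * W := by
        rw [hX, mul_nonsing_inv A hA, Matrix.mul_one, hperp, Matrix.zero_mul, add_zero]

end Matrix

theorem stmt_4_general {n k : ℕ} (A : Matrix (Fin n) (Fin n) ℝ) (J : Matrix (Fin k) (Fin k) ℝ)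
    (hA : Aᵀ = A) (hAinv : IsUnit A.det)
    (X : Matrix (Fin n) (Fin k) ℝ) (hX : Xᵀ * A * X = J)
    (Xp : Matrix (Fin n) (Fin (n - k)) ℝ)
    (hperp : Xᵀ * Xp = 0)
    (W : Matrix (Fin k) (Fin k) ℝ) (K : Matrix (Fin (n - k)) (Fin k) ℝ) :
    (X * W + A⁻¹ * Xp * K)ᵀ * A * X + Xᵀ * A * (X * W + A⁻¹ * Xp * K) = 0 ↔
      (J * W)ᵀ = -(J * W) := by
  rw [transpose_mul_mul_eq_transpose_of_transpose_eq hA,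
    transpose_mul_mul_add_nonsing_inv_mul_mul hAinv hX hperp, add_eq_zero_iff_eq_neg]

/-- For `Z = X W + A⁻¹ X⊥ K`, one has `Zᵀ A X + Xᵀ A Z = 0` iff `J W` is skew-symmetric,
for any `K`. -/
theorem stmt_4 {n k : ℕ} (A : Matrix (Fin n) (Fin n) ℝ) (J : Matrix (Fin k) (Fin k) ℝ)
    (hA : Aᵀ = A) (hAinv : IsUnit A.det) (hJ : Jᵀ = J) (hJ2 : J * J = 1)
    (X : Matrix (Fin n) (Fin k) ℝ) (hX : Xᵀ * A * X = J)
    (Xp : Matrix (Fin n) (Fin (n - k)) ℝ) (hXp : Xp.rank = n - k)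
    (hperp : Xᵀ * Xp = 0)
    (W : Matrix (Fin k) (Fin k) ℝ) (K : Matrix (Fin (n - k)) (Fin k) ℝ) :
    (X * W + A⁻¹ * Xp * K)ᵀ * A * X + Xᵀ * A * (X * W + A⁻¹ * Xp * K) = 0 ↔
      (J * W)ᵀ = -(J * W) :=
  stmt_4_general A J hA hAinv X hX Xp hperp W K
end

section
/- The normal space at X to the indefinite Stiefel manifold with respect to the generalized canonical metric g_{ρ,X⊥}(Z₁,Z₂) = (1/ρ)tr(W₁ᵀW₂) + tr(K₁ᵀΓ₃⁻¹K₂) (where Zᵢ = XWᵢ + A⁻¹X⊥Kᵢ) equals {XU : JU symmetric}. That is, N = XU_N + A⁻¹X⊥K_N satisfies g_{ρ,X⊥}(N,Z) = 0 for all Z = XW + A⁻¹X⊥K with JW skew-symmetric and K arbitrary, if and only if K_N = 0 and JU_N is symmetric. -/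
open Matrix

lemma aux_tr_zero {a b : ℕ} (M : Matrix (Fin a) (Fin b) ℝ)
    (h : Matrix.trace (Mᵀ * M) = 0) : M = 0 := by
  have h2 : ∑ j, ∑ i, (M i j) ^ 2 = 0 := by
    simpa [Matrix.trace, Matrix.mul_apply, Matrix.diag, sq] using h
  ext i j
  have hnn : ∀ j ∈ Finset.univ, (0:ℝ) ≤ ∑ i, (M i j) ^ 2 := by
    intro j _; positivity
  have := (Finset.sum_eq_zero_iff_of_nonneg hnn).mp h2 j (Finset.mem_univ j)
  have hnn2 : ∀ i ∈ Finset.univ, (0:ℝ) ≤ (M i j) ^ 2 := by intro i _; positivity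
  have := (Finset.sum_eq_zero_iff_of_nonneg hnn2).mp this i (Finset.mem_univ i)
  simpa using pow_eq_zero_iff (n := 2) (by norm_num) |>.mp this

/-- Characterization of the normal space under the generalized canonical metric:
`N = X U_N + A⁻¹ X⊥ K_N` is `g_{ρ,X⊥}`-orthogonal to every tangent vector
`Z = X W + A⁻¹ X⊥ K` (with `J W` skew-symmetric, `K` arbitrary) if and only if
`K_N = 0` and `J U_N` is symmetric. -/
theorem stmt_9 {n k : ℕ} (A : Matrix (Fin n) (Fin n) ℝ) (J : Matrix (Fin k) (Fin k) ℝ)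
    (hA : Aᵀ = A) (hAinv : IsUnit A.det) (hJ : Jᵀ = J) (hJ2 : J * J = 1)
    (X : Matrix (Fin n) (Fin k) ℝ) (hX : Xᵀ * A * X = J)
    (Xp : Matrix (Fin n) (Fin (n - k)) ℝ) (hXp : Xp.rank = n - k)
    (hperp : Xᵀ * Xp = 0)
    (ρ : ℝ) (hρ : 0 < ρ) (Γ₃ : Matrix (Fin (n - k)) (Fin (n - k)) ℝ) (hΓ₃ : Γ₃.PosDef)
    (UN : Matrix (Fin k) (Fin k) ℝ) (KN : Matrix (Fin (n - k)) (Fin k) ℝ) :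
    (∀ (W : Matrix (Fin k) (Fin k) ℝ) (K : Matrix (Fin (n - k)) (Fin k) ℝ),
        (J * W)ᵀ = -(J * W) →
          ρ⁻¹ * Matrix.trace (UNᵀ * W) + Matrix.trace (KNᵀ * Γ₃⁻¹ * K) = 0) ↔
      (KN = 0 ∧ (J * UN)ᵀ = J * UN) := by
  have hΓd : IsUnit Γ₃.det := isUnit_iff_ne_zero.mpr hΓ₃.det_pos.ne'
  have hρne : ρ⁻¹ ≠ 0 := inv_ne_zero hρ.ne'
  constructor
  · intro h
    -- KN = 0
    have hK0 : KN = 0 := by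
      have h1 := h 0 (Γ₃ * KN) (by simp)
      rw [Matrix.mul_assoc, ← Matrix.mul_assoc Γ₃⁻¹, Matrix.nonsing_inv_mul _ hΓd] at h1
      simp at h1
      exact aux_tr_zero KN (by simpa using h1)
    subst hK0
    refine ⟨rfl, ?_⟩
    -- trace (UNᵀ * W) = 0 for all W with JW skew
    have htr : ∀ W : Matrix (Fin k) (Fin k) ℝ, (J * W)ᵀ = -(J * W) →
        Matrix.trace (UNᵀ * W) = 0 := by
      intro W hW
      have := h W 0 hW
      simp at this
      rcases this with h' | h'
      · exact absurd h' hρ.ne'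
      · exact h'
    -- Let M := J * UN. Show Mᵀ = M. Use S := M - Mᵀ skew, W := J * S.
    set M := J * UN with hM
    set S := M - Mᵀ with hS
    have hSskew : Sᵀ = -S := by simp [hS, sub_eq_add_neg, add_comm]
    have hWs : (J * (J * S))ᵀ = -(J * (J * S)) := by
      rw [← Matrix.mul_assoc, hJ2, Matrix.one_mul]
      exact hSskew
    have h0 : Matrix.trace (UNᵀ * (J * S)) = 0 := htr (J * S) hWs
    have hid : UNᵀ * J = Mᵀ := by simp [hM, Matrix.transpose_mul, hJ]
    rw [← Matrix.mul_assoc, hid] at h0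
    -- trace (Mᵀ * (M - Mᵀ)) = 0; also trace(M * (M - Mᵀ)) = -trace(Mᵀ*(M-Mᵀ)) = 0
    have h0' : Matrix.trace (M * S) = 0 := by
      have : Matrix.trace (M * S) = Matrix.trace (Sᵀ * Mᵀ) := by
        rw [← Matrix.trace_transpose (M * S), Matrix.transpose_mul]
      rw [this, hSskew] at *
      have : Matrix.trace ((-S) * Mᵀ) = -Matrix.trace (Mᵀ * S) := by
        rw [Matrix.neg_mul, Matrix.trace_neg, Matrix.trace_mul_comm]
      rw [this, h0]; ring
    have hfro : Matrix.trace (Sᵀ * S) = 0 := by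
      have he : Sᵀ * S = Mᵀ * S - M * S := by
        rw [hS, Matrix.transpose_sub, Matrix.transpose_transpose, Matrix.sub_mul]
      rw [he, Matrix.trace_sub, h0, h0', sub_zero]
    have : S = 0 := aux_tr_zero S hfro
    have : M = Mᵀ := by
      exact sub_eq_zero.mp (by simpa [hS] using this)
    simpa [hM] using this.symm
  · rintro ⟨hK0, hsym⟩ W K hW
    subst hK0
    simp only [Matrix.transpose_zero, Matrix.zero_mul, Matrix.trace_zero, add_zero]
    -- trace (UNᵀ * W) = trace (Mᵀ * (J*W)) with M sym, J*W skew
    have hUW : UNᵀ * W = (J * UN)ᵀ * (J * W) := by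
      rw [Matrix.transpose_mul, hJ, Matrix.mul_assoc, ← Matrix.mul_assoc J J, hJ2,
        Matrix.one_mul]
    have : Matrix.trace (UNᵀ * W) = 0 := by
      rw [hUW, hsym]
      set T := J * UN
      set S := J * W
      have : Matrix.trace (T * S) = -Matrix.trace (T * S) := by
        conv_lhs => rw [← Matrix.trace_transpose (T * S), Matrix.transpose_mul, hW,
          ← hsym]
        rw [Matrix.neg_mul, Matrix.trace_neg, Matrix.trace_mul_comm,
          Matrix.transpose_transpose]
      linarith
    rw [this, mul_zero]
end

section
/- Let G = ∇f̄(X) ∈ ℝ^{n×k}. The vector grad = ρ·XJ·skew(JXᵀG) + A⁻¹X⊥Γ₃X⊥ᵀA⁻¹G lies in the tangent space at X (gradᵀAX + XᵀA·grad = 0) and satisfies g_{ρ,X⊥}(grad, Z) = tr(GᵀZ) for every tangent vector Z at X. -/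
/-!
Put `N = ρ X Xᵀ + T` with `T = A⁻¹ X⊥ Γ₃ X⊥ᵀ A⁻¹` and `S = sym(J Xᵀ G)`. Since `X⊥ᵀ X = 0` and
`Xᵀ A X = J`, we get `N A X = ρ X J`, and with `J² = 1` this turns the formula for `grad` into
`grad = N (G - A X S)`. Hence `g(grad, Z) = tr(Gᵀ Z) - tr(S Xᵀ A Z)`, and the last trace vanishes
because `S` is symmetric while `Xᵀ A Z` is skew for tangent `Z`. Tangency of `grad` is the identity
`Xᵀ A grad = ρ skew(J Xᵀ G)`. Finally `N` is positive definite: a vector `v` with `Xᵀ v = 0` and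
`X⊥ᵀ A⁻¹ v = 0` has `A⁻¹ v ∈ ker X⊥ᵀ = range X` by a dimension count, say `A⁻¹ v = X a`, and then
`J a = Xᵀ v = 0` forces `v = 0`.
-/

open Matrix

variable {m l p : Type*} [Fintype m] [Fintype l] [Fintype p]

theorem Matrix.range_mulVecLin_eq_ker_of_rank_add {K : Type*} [Field K]
    (X : Matrix m l K) (Y : Matrix m p K) (hYX : Yᵀ * X = 0)
    (hrank : X.rank + Y.rank = Fintype.card m) :
    LinearMap.range X.mulVecLin = LinearMap.ker Yᵀ.mulVecLin := by
  refine Submodule.eq_of_le_of_finrank_le ?_ ?_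
  · rintro _ ⟨a, rfl⟩
    simp only [LinearMap.mem_ker, mulVecLin_apply, mulVec_mulVec, hYX, zero_mulVec]
  · have h := LinearMap.finrank_range_add_finrank_ker Yᵀ.mulVecLin
    rw [show Module.finrank K (LinearMap.range Yᵀ.mulVecLin) = Y.rank from Y.rank_transpose,
      Module.finrank_pi] at h
    change _ ≤ X.rank
    omega

theorem Matrix.trace_mul_eq_zero_of_transpose_eq_of_transpose_eq_neg {S K : Matrix l l ℝ}
    (hS : Sᵀ = S) (hK : Kᵀ = -K) : trace (S * K) = 0 := by
  have h : trace (S * K) = -trace (S * K) := by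
    calc trace (S * K) = trace ((S * K)ᵀ) := (trace_transpose _).symm
      _ = -trace (S * K) := by rw [transpose_mul, hS, hK, neg_mul, trace_neg, trace_mul_comm]
  linarith

theorem Matrix.posDef_smul_mul_transpose_add {X : Matrix m l ℝ} {B : Matrix p m ℝ}
    {Γ : Matrix p p ℝ} {ρ : ℝ} (hρ : 0 < ρ) (hΓ : Γ.PosDef)
    (hker : ∀ v, Xᵀ *ᵥ v = 0 → B *ᵥ v = 0 → v = 0) :
    (ρ • (X * Xᵀ) + Bᵀ * Γ * B).PosDef := by
  have hXX : (ρ • (X * Xᵀ)).PosSemidef := by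
    simpa using (posSemidef_self_mul_conjTranspose X).smul hρ.le
  have hBΓB : (Bᵀ * Γ * B).PosSemidef := by
    simpa using hΓ.posSemidef.conjTranspose_mul_mul_same B
  refine .of_dotProduct_mulVec_pos (hXX.add hBΓB).isHermitian fun v hv => ?_
  have hquad : star v ⬝ᵥ (ρ • (X * Xᵀ) + Bᵀ * Γ * B) *ᵥ v
      = ρ * (Xᵀ *ᵥ v ⬝ᵥ Xᵀ *ᵥ v) + B *ᵥ v ⬝ᵥ Γ *ᵥ (B *ᵥ v) := by
    simp only [star_trivial, add_mulVec, smul_mulVec, dotProduct_add, dotProduct_smul,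
      ← mulVec_mulVec, dotProduct_mulVec v, ← mulVec_transpose, transpose_transpose, smul_eq_mul]
  have hXv : 0 ≤ Xᵀ *ᵥ v ⬝ᵥ Xᵀ *ᵥ v := by simpa using dotProduct_star_self_nonneg (Xᵀ *ᵥ v)
  rw [hquad]
  by_cases hBv : B *ᵥ v = 0
  · have hXv' : Xᵀ *ᵥ v ≠ 0 := fun h => hv (hker v h hBv)
    have : Xᵀ *ᵥ v ⬝ᵥ Xᵀ *ᵥ v ≠ 0 := fun h => hXv' (dotProduct_self_eq_zero.mp h)
    rw [hBv, zero_dotProduct, add_zero]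
    exact mul_pos hρ (lt_of_le_of_ne hXv (Ne.symm this))
  · have := hΓ.dotProduct_mulVec_pos hBv
    rw [star_trivial] at this
    positivity

theorem Matrix.rank_eq_card_of_isUnit_mul [DecidableEq l] {K : Type*} [Field K]
    {B : Matrix l m K} {X : Matrix m l K} (h : IsUnit (B * X)) : X.rank = Fintype.card l :=
  le_antisymm X.rank_le_card_width <| calc
    Fintype.card l = (B * X).rank := ((B * X).rank_of_isUnit h).symm
    _ ≤ X.rank := rank_mul_le_right B X

theorem isUnit_smul_mul_transpose_add_of_rank_eq [DecidableEq m] [DecidableEq l]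
    {A : Matrix m m ℝ} {J : Matrix l l ℝ} {X : Matrix m l ℝ} {Xp : Matrix m p ℝ}
    {Γ : Matrix p p ℝ} {ρ : ℝ} (hA : Aᵀ = A) (hAinv : IsUnit A.det) (hJ2 : J * J = 1)
    (hX : Xᵀ * A * X = J) (hXp : Xp.rank = Fintype.card m - Fintype.card l)
    (hperp : Xᵀ * Xp = 0) (hρ : 0 < ρ) (hΓ : Γ.PosDef) :
    IsUnit (ρ • (X * Xᵀ) + A⁻¹ * Xp * Γ * Xpᵀ * A⁻¹) := by
  have hX_rank : X.rank = Fintype.card l :=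
    rank_eq_card_of_isUnit_mul (hX ▸ IsUnit.of_mul_eq_one J hJ2)
  have hcard : Fintype.card l ≤ Fintype.card m := hX_rank ▸ X.rank_le_card_height
  have hrange := range_mulVecLin_eq_ker_of_rank_add X Xp
    (by simpa [transpose_mul] using congrArg transpose hperp) (by omega)
  have hAinv_symm : A⁻¹ᵀ = A⁻¹ := by rw [transpose_nonsing_inv, hA]
  have hT : A⁻¹ * Xp * Γ * Xpᵀ * A⁻¹ = (Xpᵀ * A⁻¹)ᵀ * Γ * (Xpᵀ * A⁻¹) := by
    simp [transpose_mul, hAinv_symm, Matrix.mul_assoc]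
  rw [hT]
  refine (posDef_smul_mul_transpose_add hρ hΓ fun v hXv hBv => ?_).isUnit
  obtain ⟨a, ha⟩ : A⁻¹ *ᵥ v ∈ LinearMap.range X.mulVecLin := by
    rw [hrange, LinearMap.mem_ker, mulVecLin_apply, mulVec_mulVec]
    exact hBv
  rw [mulVecLin_apply] at ha
  have hv : v = A *ᵥ (X *ᵥ a) := by
    rw [ha, mulVec_mulVec, mul_nonsing_inv A hAinv, one_mulVec]
  have hJa : J *ᵥ a = 0 := by
    rw [← hX, ← hXv, hv, mulVec_mulVec, mulVec_mulVec, Matrix.mul_assoc]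
  have ha0 : a = 0 := by
    rw [← one_mulVec a, ← hJ2, ← mulVec_mulVec, hJa, mulVec_zero]
  rw [hv, ha0, mulVec_zero, mulVec_zero]

section CanonicalGrad

variable [DecidableEq l] {A : Matrix m m ℝ} {J : Matrix l l ℝ} {X : Matrix m l ℝ}
  {T : Matrix m m ℝ} {ρ : ℝ} {G : Matrix m l ℝ}

noncomputable def canonicalGrad (ρ : ℝ) (J : Matrix l l ℝ) (X : Matrix m l ℝ) (T : Matrix m m ℝ)
    (G : Matrix m l ℝ) : Matrix m l ℝ :=
  ρ • (X * J * ((1 / 2 : ℝ) • (J * Xᵀ * G - (J * Xᵀ * G)ᵀ))) + T * G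

theorem transpose_mul_mul_canonicalGrad (hA : Aᵀ = A) (hJ2 : J * J = 1) (hX : Xᵀ * A * X = J)
    (hT : Tᵀ = T) (hTAX : T * A * X = 0) :
    Xᵀ * A * canonicalGrad ρ J X T G = ρ • ((1 / 2 : ℝ) • (J * Xᵀ * G - (J * Xᵀ * G)ᵀ)) := by
  have hXAT : Xᵀ * A * T = 0 := by
    simpa [transpose_mul, hA, hT, Matrix.mul_assoc] using congrArg transpose hTAX
  rw [canonicalGrad, Matrix.mul_add, Matrix.mul_smul, ← Matrix.mul_assoc, ← Matrix.mul_assoc,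
    ← Matrix.mul_assoc, hXAT, Matrix.zero_mul, add_zero, hX, hJ2, Matrix.one_mul]

theorem canonicalGrad_isTangent (hA : Aᵀ = A) (hJ2 : J * J = 1) (hX : Xᵀ * A * X = J)
    (hT : Tᵀ = T) (hTAX : T * A * X = 0) :
    (canonicalGrad ρ J X T G)ᵀ * A * X + Xᵀ * A * canonicalGrad ρ J X T G = 0 := by
  have h := transpose_mul_mul_canonicalGrad (ρ := ρ) (G := G) hA hJ2 hX hT hTAX
  have hsymm : (canonicalGrad ρ J X T G)ᵀ * A * X = (Xᵀ * A * canonicalGrad ρ J X T G)ᵀ := by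
    simp [transpose_mul, hA, Matrix.mul_assoc]
  rw [hsymm, h, transpose_smul, transpose_smul, transpose_sub, transpose_transpose]
  module

theorem canonicalGrad_eq_mul_sub (hJ2 : J * J = 1) (hX : Xᵀ * A * X = J)
    (hTAX : T * A * X = 0) :
    canonicalGrad ρ J X T G = (ρ • (X * Xᵀ) + T) *
      (G - A * X * ((1 / 2 : ℝ) • (J * Xᵀ * G + (J * Xᵀ * G)ᵀ))) := by
  have hNAX : (ρ • (X * Xᵀ) + T) * A * X = ρ • (X * J) := by
    simp only [Matrix.add_mul, Matrix.smul_mul, Matrix.mul_assoc] at hTAX hX ⊢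
    rw [hX, hTAX, add_zero]
  have hXJC : X * J * (J * Xᵀ * G) = X * Xᵀ * G := by
    simp only [Matrix.mul_assoc, ← Matrix.mul_assoc J J, hJ2, Matrix.one_mul]
  rw [Matrix.mul_sub, ← Matrix.mul_assoc, ← Matrix.mul_assoc, hNAX, canonicalGrad]
  simp only [Matrix.mul_smul, Matrix.smul_mul, Matrix.mul_sub, Matrix.mul_add, Matrix.add_mul,
    hXJC]
  module

theorem trace_canonicalGrad_mul_inv_mul [DecidableEq m] (hA : Aᵀ = A) (hJ2 : J * J = 1)
    (hX : Xᵀ * A * X = J) (hT : Tᵀ = T) (hTAX : T * A * X = 0)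
    (hN : IsUnit (ρ • (X * Xᵀ) + T)) {Z : Matrix m l ℝ}
    (hZ : Zᵀ * A * X + Xᵀ * A * Z = 0) :
    trace ((canonicalGrad ρ J X T G)ᵀ * (ρ • (X * Xᵀ) + T)⁻¹ * Z) = trace (Gᵀ * Z) := by
  set N := ρ • (X * Xᵀ) + T
  set S := (1 / 2 : ℝ) • (J * Xᵀ * G + (J * Xᵀ * G)ᵀ)
  have hN_symm : Nᵀ = N := by simp [N, hT]
  have hS_symm : Sᵀ = S := by simp [S, add_comm]
  have hskew : (Xᵀ * A * Z)ᵀ = -(Xᵀ * A * Z) := by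
    rw [← eq_neg_of_add_eq_zero_left hZ]
    simp [transpose_mul, hA, Matrix.mul_assoc]
  have hcancel : (N * (G - A * X * S))ᵀ * N⁻¹ * Z = (G - A * X * S)ᵀ * Z := by
    rw [transpose_mul, hN_symm, Matrix.mul_assoc _ N, Matrix.mul_nonsing_inv N
      ((isUnit_iff_isUnit_det N).mp hN), Matrix.mul_one]
  have hsplit : (G - A * X * S)ᵀ * Z = Gᵀ * Z - S * (Xᵀ * A * Z) := by
    simp [transpose_mul, Matrix.sub_mul, hA, hS_symm, Matrix.mul_assoc]
  rw [canonicalGrad_eq_mul_sub hJ2 hX hTAX, hcancel, hsplit, trace_sub,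
    trace_mul_eq_zero_of_transpose_eq_of_transpose_eq_neg hS_symm hskew, sub_zero]

end CanonicalGrad

theorem stmt_11_general {n k : ℕ} (A : Matrix (Fin n) (Fin n) ℝ) (J : Matrix (Fin k) (Fin k) ℝ)
    (hA : Aᵀ = A) (hAinv : IsUnit A.det) (hJ2 : J * J = 1)
    (X : Matrix (Fin n) (Fin k) ℝ) (hX : Xᵀ * A * X = J)
    (Xp : Matrix (Fin n) (Fin (n - k)) ℝ) (hXp : Xp.rank = n - k)
    (hperp : Xᵀ * Xp = 0)
    (ρ : ℝ) (hρ : 0 < ρ) (Γ₃ : Matrix (Fin (n - k)) (Fin (n - k)) ℝ) (hΓ₃ : Γ₃.PosDef)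
    (G : Matrix (Fin n) (Fin k) ℝ)
    (grad : Matrix (Fin n) (Fin k) ℝ)
    (hgrad : grad = ρ • (X * J * ((1 / 2 : ℝ) • (J * Xᵀ * G - (J * Xᵀ * G)ᵀ))) +
        A⁻¹ * Xp * Γ₃ * Xpᵀ * A⁻¹ * G) :
    gradᵀ * A * X + Xᵀ * A * grad = 0 ∧
    ∀ Z : Matrix (Fin n) (Fin k) ℝ, Zᵀ * A * X + Xᵀ * A * Z = 0 →
      Matrix.trace (gradᵀ * (ρ • (X * Xᵀ) + A⁻¹ * Xp * Γ₃ * Xpᵀ * A⁻¹)⁻¹ * Z) =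
        Matrix.trace (Gᵀ * Z) := by
  set T := A⁻¹ * Xp * Γ₃ * Xpᵀ * A⁻¹
  have hAinv_symm : A⁻¹ᵀ = A⁻¹ := by rw [transpose_nonsing_inv, hA]
  have hΓ₃_symm : Γ₃ᵀ = Γ₃ :=
    (conjTranspose_eq_transpose_of_trivial Γ₃).symm.trans hΓ₃.isHermitian
  have hT : Tᵀ = T := by simp [T, transpose_mul, hAinv_symm, hΓ₃_symm, Matrix.mul_assoc]
  have hXpX : Xpᵀ * X = 0 := by simpa [transpose_mul] using congrArg transpose hperp
  have hTAX : T * A * X = 0 := calc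
    T * A * X = A⁻¹ * Xp * Γ₃ * (Xpᵀ * (A⁻¹ * A) * X) := by simp only [T, Matrix.mul_assoc]
    _ = 0 := by rw [nonsing_inv_mul A hAinv, Matrix.mul_one, hXpX, Matrix.mul_zero]
  have hN : IsUnit (ρ • (X * Xᵀ) + T) :=
    isUnit_smul_mul_transpose_add_of_rank_eq hA hAinv hJ2 hX (by simpa using hXp) hperp hρ hΓ₃
  obtain rfl : grad = canonicalGrad ρ J X T G := hgrad
  exact ⟨canonicalGrad_isTangent hA hJ2 hX hT hTAX,
    fun Z hZ => trace_canonicalGrad_mul_inv_mul hA hJ2 hX hT hTAX hN hZ⟩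

/-- The Riemannian gradient under the generalized canonical metric:
`grad = ρ X J skew(J Xᵀ G) + A⁻¹ X⊥ Γ₃ X⊥ᵀ A⁻¹ G` is a tangent vector at `X` and
satisfies `g_{ρ,X⊥}(grad, Z) = tr(Gᵀ Z)` for every tangent vector `Z`, where
`g_{ρ,X⊥}(Z₁,Z₂) = tr(Z₁ᵀ M_X Z₂)` with `M_X = (ρ X Xᵀ + A⁻¹ X⊥ Γ₃ X⊥ᵀ A⁻¹)⁻¹`. -/
theorem stmt_11 {n k : ℕ} (A : Matrix (Fin n) (Fin n) ℝ) (J : Matrix (Fin k) (Fin k) ℝ)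
    (hA : Aᵀ = A) (hAinv : IsUnit A.det) (hJ : Jᵀ = J) (hJ2 : J * J = 1)
    (X : Matrix (Fin n) (Fin k) ℝ) (hX : Xᵀ * A * X = J)
    (Xp : Matrix (Fin n) (Fin (n - k)) ℝ) (hXp : Xp.rank = n - k)
    (hperp : Xᵀ * Xp = 0)
    (ρ : ℝ) (hρ : 0 < ρ) (Γ₃ : Matrix (Fin (n - k)) (Fin (n - k)) ℝ) (hΓ₃ : Γ₃.PosDef)
    (G : Matrix (Fin n) (Fin k) ℝ)
    (grad : Matrix (Fin n) (Fin k) ℝ)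
    (hgrad : grad = ρ • (X * J * ((1 / 2 : ℝ) • (J * Xᵀ * G - (J * Xᵀ * G)ᵀ))) +
        A⁻¹ * Xp * Γ₃ * Xpᵀ * A⁻¹ * G) :
    gradᵀ * A * X + Xᵀ * A * grad = 0 ∧
    ∀ Z : Matrix (Fin n) (Fin k) ℝ, Zᵀ * A * X + Xᵀ * A * Z = 0 →
      Matrix.trace (gradᵀ * (ρ • (X * Xᵀ) + A⁻¹ * Xp * Γ₃ * Xpᵀ * A⁻¹)⁻¹ * Z) =
        Matrix.trace (Gᵀ * Z) :=
  stmt_11_general A J hA hAinv hJ2 X hX Xp hXp hperp ρ hρ Γ₃ hΓ₃ G grad hgrad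
end

section
/- Let J ∈ ℝ^{k×k} symmetric with J² = I, Θ ∈ ℝ^{k×k} skew-symmetric, Γ ∈ ℝ^{k×k} symmetric, and let Λ be the 2k×2k block matrix with blocks [[JΘ, JΓ],[I_k, JΘ]], and S the 2k×2k block matrix [[0, J],[−J, 0]]. Then exp(tΛ)ᵀ · S · exp(tΛ) = S for all t ∈ ℝ. -/
/-!
The block matrix `Λ` is skew-adjoint for the form `S`, i.e. `Λᵀ S = S (-Λ)`, and so is `tΛ`.
Skew-adjointness says that `S` intertwines `A` with `-Aᵀ`, hence `exp A` with `exp (-Aᵀ)`,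
which gives `(exp A)ᵀ S exp A = exp (-(-Aᵀ)) S exp A = S`.
-/

open Matrix

noncomputable section

namespace Matrix

variable {m 𝕜 : Type*} [Fintype m] [DecidableEq m]

theorem IsSkewAdjoint.smul {R : Type*} [CommRing R] {S A : Matrix m m R}
    (h : S.IsSkewAdjoint A) (c : R) : S.IsSkewAdjoint (c • A) := by
  rw [← mem_skewAdjointMatricesSubmodule] at h ⊢
  exact Submodule.smul_mem _ c h

theorem IsSkewAdjoint.transpose_exp_mul_mul_exp [RCLike 𝕜] {S A : Matrix m m 𝕜}
    (h : S.IsSkewAdjoint A) : (NormedSpace.exp A)ᵀ * S * NormedSpace.exp A = S := by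
  have hconj : SemiconjBy S A (-Aᵀ) := by
    change Aᵀ * S = S * -A at h
    rw [SemiconjBy, neg_mul, h, mul_neg, neg_neg]
  have key : NormedSpace.exp (-(-Aᵀ)) * S * NormedSpace.exp A = S := by
    open scoped Norms.Operator in exact hconj.exp_neg_mul_mul_exp_eq_self
  rwa [neg_neg, exp_transpose] at key

theorem isSkewAdjoint_fromBlocks {n R : Type*} [Fintype n] [DecidableEq n] [CommRing R]
    {J Θ Γ : Matrix n n R} (hJ : Jᵀ = J) (hJ2 : J * J = 1) (hΘ : Θᵀ = -Θ) (hΓ : Γᵀ = Γ) :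
    (fromBlocks 0 J (-J) 0).IsSkewAdjoint (fromBlocks (J * Θ) (J * Γ) 1 (J * Θ)) := by
  have hJJ (X : Matrix n n R) : J * (J * X) = X := by
    rw [← Matrix.mul_assoc, hJ2, Matrix.one_mul]
  simp [Matrix.IsSkewAdjoint, Matrix.IsAdjointPair, fromBlocks_transpose, fromBlocks_multiply,
    fromBlocks_neg, transpose_mul, hJ, hΘ, hΓ, Matrix.mul_assoc, hJ2, hJJ]

end Matrix

/-- For `Θ` skew-symmetric and `Γ` symmetric, the block matrix
`Λ = [JΘ, JΓ; I_k, JΘ]` satisfies `exp(tΛ)ᵀ S exp(tΛ) = S` for all `t`, where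
`S = [0, J; −J, 0]`. -/
theorem stmt_15 {k : ℕ} (J : Matrix (Fin k) (Fin k) ℝ) (hJ : Jᵀ = J) (hJ2 : J * J = 1)
    (Θ Γ : Matrix (Fin k) (Fin k) ℝ) (hΘ : Θᵀ = -Θ) (hΓ : Γᵀ = Γ)
    (Λ S : Matrix (Fin k ⊕ Fin k) (Fin k ⊕ Fin k) ℝ)
    (hΛ : Λ = fromBlocks (J * Θ) (J * Γ) 1 (J * Θ))
    (hS : S = fromBlocks 0 J (-J) 0) :
    ∀ t : ℝ, (NormedSpace.exp (t • Λ))ᵀ * S * NormedSpace.exp (t • Λ) = S := by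
  intro t
  subst hΛ hS
  exact ((isSkewAdjoint_fromBlocks hJ hJ2 hΘ hΓ).smul t).transpose_exp_mul_mul_exp

end
end

section
/- Given X ∈ ℝ^{n×k} with XᵀAX = J and Z with ZᵀAX + XᵀAZ = 0, set W₀ = XᵀAZ, V₀ = ZᵀAZ, and Ψ = [[JW₀, −JV₀],[I_k, JW₀]] ∈ ℝ^{2k×2k}. Then the curve Y(t) = [X, Z]·exp(tΨ)·[I_k; 0]·exp(−tJW₀) satisfies Y(t)ᵀ A Y(t) = J for all t ∈ ℝ. -/
open Matrix

/-!
The Gram matrix of `[X, Z]` is `M = [J, W₀; −W₀, V₀]`, and `Ψ` is skew with respect to `M`,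
i.e. `Ψᵀ M = −M Ψ` (using `J² = 1`, `W₀ᵀ = −W₀`, `V₀ᵀ = V₀`), so `exp(tΨ)` preserves `M`.
Compressing by `[I_k; 0]` leaves the top-left block `J`, which `exp(−tJW₀)` preserves because
`JW₀` is skew with respect to `J`.
-/

namespace Matrix

variable {m R : Type*}

theorem transpose_mul_mul_mul_comp {a b : Type*} [Fintype a] [Fintype b] [CommSemiring R]
    (B : Matrix a b R) (C : Matrix b m R) (M : Matrix a a R) :
    (B * C)ᵀ * M * (B * C) = Cᵀ * (Bᵀ * M * B) * C := by
  simp only [transpose_mul, Matrix.mul_assoc]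

theorem transpose_fromCols_mul_mul_fromCols {n k₁ k₂ : Type*} [Fintype n] [CommSemiring R]
    (M : Matrix n n R) (X : Matrix n k₁ R) (Z : Matrix n k₂ R) :
    (fromCols X Z)ᵀ * M * fromCols X Z =
      fromBlocks (Xᵀ * M * X) (Xᵀ * M * Z) (Zᵀ * M * X) (Zᵀ * M * Z) := by
  rw [transpose_fromCols, fromRows_mul, fromRows_mul_fromCols]

theorem transpose_fromRows_one_zero_mul_fromBlocks_mul [Fintype m] [DecidableEq m] {l : Type*}
    [Fintype l] [CommSemiring R] (P : Matrix m m R) (Q : Matrix m l R) (S : Matrix l m R)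
    (T : Matrix l l R) :
    (fromRows (1 : Matrix m m R) (0 : Matrix l m R))ᵀ * fromBlocks P Q S T *
      fromRows (1 : Matrix m m R) (0 : Matrix l m R) = P := by
  rw [transpose_fromRows, fromCols_mul_fromBlocks, transpose_one, transpose_zero,
    fromCols_mul_fromRows]
  simp

variable [Fintype m] [DecidableEq m]

theorem transpose_exp_smul_mul_mul_exp_smul {M P : Matrix m m ℝ} (h : Pᵀ * M = -(M * P))
    (t : ℝ) : (NormedSpace.exp (t • P))ᵀ * M * NormedSpace.exp (t • P) = M := by
  have hsemi : SemiconjBy M (t • P) (-(t • P)ᵀ) := by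
    simp only [SemiconjBy, transpose_smul, mul_smul_comm, smul_mul_assoc, Matrix.neg_mul, h,
      smul_neg, neg_neg]
  have key : NormedSpace.exp (-(-(t • P)ᵀ)) * M * NormedSpace.exp (t • P) = M :=
    open scoped Norms.Operator in hsemi.exp_neg_mul_mul_exp_eq_self
  rwa [neg_neg, exp_transpose] at key

theorem transpose_mul_fromBlocks_eq_neg_mul [CommRing R] {J W V : Matrix m m R}
    (hJ : Jᵀ = J) (hJ2 : J * J = 1) (hW : Wᵀ = -W) (hV : Vᵀ = V) :
    (fromBlocks (J * W) (-(J * V)) 1 (J * W))ᵀ * fromBlocks J W (-W) V =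
      -(fromBlocks J W (-W) V * fromBlocks (J * W) (-(J * V)) 1 (J * W)) := by
  have hJJ (B : Matrix m m R) : J * (J * B) = B := by rw [← Matrix.mul_assoc, hJ2, Matrix.one_mul]
  simp only [fromBlocks_transpose, transpose_neg, transpose_mul, transpose_one, hJ, hW, hV,
    fromBlocks_neg, fromBlocks_multiply, fromBlocks_inj]
  refine ⟨?_, ?_, ?_, ?_⟩ <;>
    simp only [Matrix.mul_assoc, hJ2, hJJ, Matrix.neg_mul, Matrix.mul_neg, neg_neg,
      Matrix.one_mul, Matrix.mul_one] <;>
    abel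

end Matrix

theorem stmt_16_general {n k : ℕ} (A : Matrix (Fin n) (Fin n) ℝ) (J : Matrix (Fin k) (Fin k) ℝ)
    (hA : Aᵀ = A) (hJ : Jᵀ = J) (hJ2 : J * J = 1)
    (X : Matrix (Fin n) (Fin k) ℝ) (hX : Xᵀ * A * X = J)
    (Z : Matrix (Fin n) (Fin k) ℝ) (hZ : Zᵀ * A * X + Xᵀ * A * Z = 0)
    (W₀ V₀ : Matrix (Fin k) (Fin k) ℝ) (hW₀ : W₀ = Xᵀ * A * Z) (hV₀ : V₀ = Zᵀ * A * Z)
    (Ψ : Matrix (Fin k ⊕ Fin k) (Fin k ⊕ Fin k) ℝ)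
    (hΨ : Ψ = fromBlocks (J * W₀) (-(J * V₀)) 1 (J * W₀))
    (Y : ℝ → Matrix (Fin n) (Fin k) ℝ)
    (hY : Y = fun t => fromCols X Z * NormedSpace.exp (t • Ψ) *
        fromRows (1 : Matrix (Fin k) (Fin k) ℝ) (0 : Matrix (Fin k) (Fin k) ℝ) * NormedSpace.exp (-(t • (J * W₀)))) :
    ∀ t : ℝ, (Y t)ᵀ * A * Y t = J := by
  intro t
  have hZAX : Zᵀ * A * X = -W₀ := by rw [hW₀]; exact eq_neg_of_add_eq_zero_left hZ
  have hW₀T : W₀ᵀ = -W₀ := by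
    rw [hW₀, transpose_mul, transpose_mul, transpose_transpose, hA, ← Matrix.mul_assoc, hZAX, hW₀]
  have hV₀T : V₀ᵀ = V₀ := by
    rw [hV₀, transpose_mul, transpose_mul, transpose_transpose, hA, ← Matrix.mul_assoc]
  have hGram : (fromCols X Z)ᵀ * A * fromCols X Z = fromBlocks J W₀ (-W₀) V₀ := by
    rw [transpose_fromCols_mul_mul_fromCols, hX, ← hW₀, hZAX, ← hV₀]
  have hΨ_skew := transpose_mul_fromBlocks_eq_neg_mul hJ hJ2 hW₀T hV₀T
  have hJW₀_skew : (J * W₀)ᵀ * J = -(J * (J * W₀)) := by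
    simp only [transpose_mul, hJ, hW₀T, Matrix.neg_mul, Matrix.mul_assoc, hJ2, Matrix.mul_one]
    rw [← Matrix.mul_assoc, hJ2, Matrix.one_mul]
  subst hY hΨ
  simp only [← neg_smul]
  rw [transpose_mul_mul_mul_comp, transpose_mul_mul_mul_comp, transpose_mul_mul_mul_comp, hGram,
    transpose_exp_smul_mul_mul_exp_smul hΨ_skew, transpose_fromRows_one_zero_mul_fromBlocks_mul,
    transpose_exp_smul_mul_mul_exp_smul hJW₀_skew]

/-- The quasi-geodesic `Y(t) = [X, Z] exp(tΨ) [I_k; 0] exp(−t J W₀)` stays on the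
indefinite Stiefel manifold: `Y(t)ᵀ A Y(t) = J` for all `t`. -/
theorem stmt_16 {n k : ℕ} (A : Matrix (Fin n) (Fin n) ℝ) (J : Matrix (Fin k) (Fin k) ℝ)
    (hA : Aᵀ = A) (hAinv : IsUnit A.det) (hJ : Jᵀ = J) (hJ2 : J * J = 1)
    (X : Matrix (Fin n) (Fin k) ℝ) (hX : Xᵀ * A * X = J)
    (Z : Matrix (Fin n) (Fin k) ℝ) (hZ : Zᵀ * A * X + Xᵀ * A * Z = 0)
    (W₀ V₀ : Matrix (Fin k) (Fin k) ℝ) (hW₀ : W₀ = Xᵀ * A * Z) (hV₀ : V₀ = Zᵀ * A * Z)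
    (Ψ : Matrix (Fin k ⊕ Fin k) (Fin k ⊕ Fin k) ℝ)
    (hΨ : Ψ = fromBlocks (J * W₀) (-(J * V₀)) 1 (J * W₀))
    (Y : ℝ → Matrix (Fin n) (Fin k) ℝ)
    (hY : Y = fun t => fromCols X Z * NormedSpace.exp (t • Ψ) *
        fromRows (1 : Matrix (Fin k) (Fin k) ℝ) (0 : Matrix (Fin k) (Fin k) ℝ) * NormedSpace.exp (-(t • (J * W₀)))) :
    ∀ t : ℝ, (Y t)ᵀ * A * Y t = J :=
  stmt_16_general A J hA hJ hJ2 X hX Z hZ W₀ V₀ hW₀ hV₀ Ψ hΨ Y hY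
end

section
/- The quasi-geodesic retraction satisfies the retraction axioms: for X with XᵀAX = J and tangent Z (ZᵀAX + XᵀAZ = 0), the map R_X(Z) = [X, Z]·exp([[JXᵀAZ, −JZᵀAZ],[I_k, JXᵀAZ]])·[I_k; 0]·exp(−JXᵀAZ) satisfies R_X(0) = X and (d/dt) R_X(tZ) |_{t=0} = Z. -/
open Matrix

noncomputable section
attribute [local instance] Matrix.normedAddCommGroup Matrix.normedSpace

/-!
Conjugating by `diag(1, t)` turns the middle factor into `exp (t • K)` with the
constant block matrix `K = [B, -C; 1, B]`, so that
`R t = [X, Z] exp (t • K) [1; 0] exp (-t • B)` for every `t`, including `t = 0`.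
The product rule then gives `R' 0 = [X, Z] K [1; 0] - X B = (X B + Z) - X B = Z`.
-/

theorem HasDerivAt.matrix_mul {l m p : Type*} [Fintype l] [Fintype m] [Fintype p]
    {f : ℝ → Matrix l m ℝ} {g : ℝ → Matrix m p ℝ} {f' : Matrix l m ℝ} {g' : Matrix m p ℝ} {x : ℝ}
    (hf : HasDerivAt f f' x) (hg : HasDerivAt g g' x) :
    HasDerivAt (fun t => f t * g t) (f' * g x + f x * g') x := by
  refine hasDerivAt_pi.2 fun i => hasDerivAt_pi.2 fun j => ?_
  simp only [mul_apply, Matrix.add_apply, ← Finset.sum_add_distrib]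
  exact HasDerivAt.fun_sum fun c _ =>
    (hasDerivAt_pi.1 (hasDerivAt_pi.1 hf i) c).mul (hasDerivAt_pi.1 (hasDerivAt_pi.1 hg c) j)

namespace Matrix

variable {m n : Type*} [Fintype n] [DecidableEq n]

/- The Banach-algebra facts about `exp` are taken with the operator norm; `exp` and `HasDerivAt`
only see the topology, which that norm shares with the entrywise one. -/
theorem hasDerivAt_exp_smul_zero (K : Matrix n n ℝ) :
    HasDerivAt (fun t : ℝ => NormedSpace.exp (t • K)) K 0 := by
  open scoped Matrix.Norms.Operator in
  have h := hasDerivAt_exp_smul_const (𝕂 := ℝ) K 0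
  rw [zero_smul, NormedSpace.exp_zero, one_mul, hasDerivAt_iff_tendsto_slope] at h
  exact hasDerivAt_iff_tendsto_slope.2 h

theorem semiconjBy_exp {V M N : Matrix n n ℝ} (h : SemiconjBy V M N) :
    SemiconjBy V (NormedSpace.exp M) (NormedSpace.exp N) := by
  open scoped Matrix.Norms.Operator in
  exact h.exp_right

section Blocks

variable {R : Type*} [CommRing R]

theorem fromCols_smul_right_eq_mul_fromBlocks (X Z : Matrix m n R) (t : R) :
    fromCols X (t • Z) =
      fromCols X Z * (fromBlocks 1 0 0 (t • 1) : Matrix (n ⊕ n) (n ⊕ n) R) := by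
  rw [fromCols_mul_fromBlocks]
  simp

theorem semiconjBy_fromBlocks_smul_one (B C : Matrix n n R) (t : R) :
    SemiconjBy (fromBlocks 1 0 0 (t • 1) : Matrix (n ⊕ n) (n ⊕ n) R)
      (fromBlocks (t • B) (-(t ^ 2 • C)) 1 (t • B)) (t • fromBlocks B (-C) 1 B) := by
  simp [SemiconjBy, fromBlocks_multiply, fromBlocks_smul, smul_smul, sq]

theorem fromBlocks_smul_one_mul_fromRows (t : R) :
    (fromBlocks 1 0 0 (t • 1) : Matrix (n ⊕ n) (n ⊕ n) R) *
        fromRows (1 : Matrix n n R) (0 : Matrix n n R) =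
      fromRows (1 : Matrix n n R) (0 : Matrix n n R) := by
  simp [fromBlocks_mul_fromRows]

end Blocks

theorem fromCols_smul_mul_exp_mul_fromRows (X Z : Matrix m n ℝ) (B C : Matrix n n ℝ) (t : ℝ) :
    fromCols X (t • Z) * NormedSpace.exp (fromBlocks (t • B) (-(t ^ 2 • C)) 1 (t • B)) *
        fromRows (1 : Matrix n n ℝ) (0 : Matrix n n ℝ) =
      fromCols X Z * NormedSpace.exp (t • fromBlocks B (-C) 1 B) *
        fromRows (1 : Matrix n n ℝ) (0 : Matrix n n ℝ) := by
  rw [fromCols_smul_right_eq_mul_fromBlocks, Matrix.mul_assoc (fromCols X Z),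
    (semiconjBy_exp (semiconjBy_fromBlocks_smul_one B C t)).eq, Matrix.mul_assoc,
    Matrix.mul_assoc, fromBlocks_smul_one_mul_fromRows, ← Matrix.mul_assoc]

end Matrix

theorem stmt_19_general {n k : ℕ} (A : Matrix (Fin n) (Fin n) ℝ) (J : Matrix (Fin k) (Fin k) ℝ)
    (X : Matrix (Fin n) (Fin k) ℝ)
    (Z : Matrix (Fin n) (Fin k) ℝ)
    (R : ℝ → Matrix (Fin n) (Fin k) ℝ)
    (hR : R = fun t => fromCols X (t • Z) *
        NormedSpace.exp (fromBlocks (t • (J * Xᵀ * A * Z)) (-(t ^ 2 • (J * Zᵀ * A * Z)))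
          1 (t • (J * Xᵀ * A * Z))) *
        fromRows (1 : Matrix (Fin k) (Fin k) ℝ) (0 : Matrix (Fin k) (Fin k) ℝ) *
        NormedSpace.exp (-(t • (J * Xᵀ * A * Z)))) :
    R 0 = X ∧ HasDerivAt R Z 0 := by
  set B := J * Xᵀ * A * Z
  set K := fromBlocks B (-(J * Zᵀ * A * Z)) 1 B
  set P := fromRows (1 : Matrix (Fin k) (Fin k) ℝ) (0 : Matrix (Fin k) (Fin k) ℝ)
  have hR' :
      R = fun t => fromCols X Z * NormedSpace.exp (t • K) * P * NormedSpace.exp (t • -B) := by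
    simp only [hR, fromCols_smul_mul_exp_mul_fromRows, smul_neg, K, P]
  have hP : fromCols X Z * P = X := by simp [P, fromCols_mul_fromRows]
  have hKP : fromCols X Z * K * P = X * B + Z := by
    simp [K, P, fromCols_mul_fromBlocks, fromCols_mul_fromRows]
  subst hR'
  refine ⟨by simp [hP], ?_⟩
  convert (((hasDerivAt_const 0 (fromCols X Z)).matrix_mul (hasDerivAt_exp_smul_zero K)).matrix_mul
    (hasDerivAt_const 0 P)).matrix_mul (hasDerivAt_exp_smul_zero (-B)) using 1
  simp [hP, hKP]

/-- The quasi-geodesic retraction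
`R_X(Z) = [X, Z] exp([J XᵀA Z, −J ZᵀA Z; I_k, J XᵀA Z]) [I_k; 0] exp(−J XᵀA Z)`
satisfies the retraction axioms: `R_X(0) = X` and `(d/dt) R_X(tZ) |_{t=0} = Z`. -/
theorem stmt_19 {n k : ℕ} (A : Matrix (Fin n) (Fin n) ℝ) (J : Matrix (Fin k) (Fin k) ℝ)
    (hA : Aᵀ = A) (hAinv : IsUnit A.det) (hJ : Jᵀ = J) (hJ2 : J * J = 1)
    (X : Matrix (Fin n) (Fin k) ℝ) (hX : Xᵀ * A * X = J)
    (Z : Matrix (Fin n) (Fin k) ℝ) (hZ : Zᵀ * A * X + Xᵀ * A * Z = 0)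
    (R : ℝ → Matrix (Fin n) (Fin k) ℝ)
    (hR : R = fun t => fromCols X (t • Z) *
        NormedSpace.exp (fromBlocks (t • (J * Xᵀ * A * Z)) (-(t ^ 2 • (J * Zᵀ * A * Z)))
          1 (t • (J * Xᵀ * A * Z))) *
        fromRows (1 : Matrix (Fin k) (Fin k) ℝ) (0 : Matrix (Fin k) (Fin k) ℝ) *
        NormedSpace.exp (-(t • (J * Xᵀ * A * Z)))) :
    R 0 = X ∧ HasDerivAt R Z 0 :=
  stmt_19_general A J X Z R hR

end
end
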